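/- arXiv:1507.06707 — 2 statements merged into one kernel-verified Lean document; each statement's English description precedes it below -/
import Mathlib

section
/- In a single round where each of n balls is placed independently and uniformly at random into one of n bins, for sufficiently large n the probability that the maximum bin load is less than log n / log log n is at most 1/n (i.e., the maximum load is Ω(log n / log log n) with high probability). -/
open Finset Filter

/-- The load of bin `b` when the balls are placed according to `f`. -/
def load (n : ℕ) (f : Fin n → Fin n) (b : Fin n) : ℕ :=
  (Finset.univ.filter (fun i => f i = b)).card

/-- The maximum bin load for the placement `f`. -/
def maxLoad (n : ℕ) (f : Fin n → Fin n) : ℕ :=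
  Finset.univ.sup (load n f)

/-!
Examine the bins one at a time and condition on where the balls that landed in the bins already
examined went. If those bins all have load `< k` and there are at most `n / (2k)` of them, at
least `n / 2` balls remain, uniform over the at least `n / 2` unexamined bins, so the next bin
receives exactly `k` of them with probability at least `p = e⁻⁴ (2k)⁻ᵏ`. Hence `t = n / (2k)`
fixed bins all have load `< k` with probability at most `(1 - p)ᵗ ≤ exp (-p t)`, and for
`k = ⌈log n / log log n⌉` one has `p t ≥ log n`.
-/

section Placements

variable {α β : Type*} [DecidableEq β]

def traceOn (s : Finset β) (f : α → β) (a : α) : Option β :=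
  if f a ∈ s then some (f a) else none

lemma traceOn_eq_some_iff {s : Finset β} {f : α → β} {b : β} (hb : b ∈ s) (a : α) :
    traceOn s f a = some b ↔ f a = b := by
  unfold traceOn
  split_ifs with h <;> grind

variable [Fintype α] {s : Finset β} {f f₀ : α → β}

lemma card_filter_eq_of_traceOn_eq (h : traceOn s f = traceOn s f₀) {b : β} (hb : b ∈ s) :
    #{a | f a = b} = #{a | f₀ a = b} := by
  simp_rw [← traceOn_eq_some_iff hb, h]

lemma card_filter_mem_le_mul_card {k : ℕ} (h : ∀ b ∈ s, #{a | f a = b} < k) :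
    #{a | f a ∈ s} ≤ k * #s :=
  card_le_mul_card_image_of_maps_to (fun a ha => (mem_filter.mp ha).2) k fun b hb => by
    rw [filter_filter]
    refine (card_le_card fun a ha => ?_).trans (h b hb).le
    exact mem_filter.mpr ⟨mem_univ a, (mem_filter.mp ha).2.2⟩

variable [DecidableEq α]

lemma sum_prod_card_erase_le_card_piFinset_filter (S : α → Finset β) (b : β) (k : ℕ) :
    ∑ K ∈ powersetCard k {a | b ∈ S a}, ∏ a ∈ Kᶜ, #((S a).erase b) ≤
      #{f ∈ Fintype.piFinset S | k ≤ #{a | f a = b}} := by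
  set withFiber : Finset α → α → Finset β := fun K a => if a ∈ K then {b} else (S a).erase b
  have fiber_eq : ∀ K, ∀ f ∈ Fintype.piFinset (withFiber K), ({a | f a = b} : Finset α) = K := by
    intro K f hf
    ext a
    have := Fintype.mem_piFinset.mp hf a
    by_cases ha : a ∈ K <;> simp_all [withFiber]
  have subset_piFinset : ∀ K ⊆ ({a | b ∈ S a} : Finset α),
      Fintype.piFinset (withFiber K) ⊆ Fintype.piFinset S := by
    intro K hK f hf
    refine Fintype.mem_piFinset.mpr fun a => ?_
    have := Fintype.mem_piFinset.mp hf a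
    by_cases ha : a ∈ K
    · simp only [withFiber, ha, if_true, mem_singleton] at this
      simpa [this] using hK ha
    · simp only [withFiber, ha, if_false] at this
      exact mem_of_mem_erase this
  have card_eq : ∀ K, #(Fintype.piFinset (withFiber K)) = ∏ a ∈ Kᶜ, #((S a).erase b) := by
    intro K
    rw [Fintype.card_piFinset, ← prod_compl_mul_prod K]
    have on_K : ∀ a ∈ K, #(withFiber K a) = 1 := fun a ha => by simp [withFiber, ha]
    have off_K : ∀ a ∈ Kᶜ, #(withFiber K a) = #((S a).erase b) := fun a ha => by
      simp [withFiber, mem_compl.mp ha]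
    rw [prod_congr rfl off_K, prod_congr rfl on_K, prod_const_one, mul_one]
  calc ∑ K ∈ powersetCard k {a | b ∈ S a}, ∏ a ∈ Kᶜ, #((S a).erase b)
      = ∑ K ∈ powersetCard k {a | b ∈ S a}, #(Fintype.piFinset (withFiber K)) := by
        simp_rw [card_eq]
    _ = #((powersetCard k {a | b ∈ S a}).biUnion fun K => Fintype.piFinset (withFiber K)) := by
        refine (card_biUnion fun K _ K' _ hne => disjoint_left.mpr fun f hf hf' => hne ?_).symm
        rw [← fiber_eq K f hf, fiber_eq K' f hf']
    _ ≤ _ := by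
        refine card_le_card fun f hf => ?_
        obtain ⟨K, hK, hfK⟩ := mem_biUnion.mp hf
        obtain ⟨hKsub, rfl⟩ := mem_powersetCard.mp hK
        exact mem_filter.mpr ⟨subset_piFinset K hKsub hfK, (congrArg card (fiber_eq K f hfK)).ge⟩

variable [Fintype β]

def traceFiber (s : Finset β) (f₀ : α → β) (a : α) : Finset β :=
  if f₀ a ∈ s then {f₀ a} else sᶜ

lemma traceOn_eq_iff_mem_piFinset :
    traceOn s f = traceOn s f₀ ↔ f ∈ Fintype.piFinset (traceFiber s f₀) := by
  simp only [funext_iff, Fintype.mem_piFinset, traceOn, traceFiber]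
  refine forall_congr' fun a => ?_
  split_ifs <;> aesop

lemma card_piFinset_traceFiber :
    #(Fintype.piFinset (traceFiber s f₀)) = #sᶜ ^ #{a | f₀ a ∉ s} := by
  have card_traceFiber : ∀ a, #(traceFiber s f₀ a) = if f₀ a ∉ s then #sᶜ else 1 := fun a => by
    unfold traceFiber
    split_ifs <;> simp_all
  simp_rw [Fintype.card_piFinset, card_traceFiber, prod_ite, prod_const_one, mul_one, prod_const]

lemma sum_prod_card_erase_traceFiber {b : β} (hb : b ∉ s) (k : ℕ) :
    ∑ K ∈ powersetCard k {a | b ∈ traceFiber s f₀ a}, ∏ a ∈ Kᶜ, #((traceFiber s f₀ a).erase b)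
      = (#{a | f₀ a ∉ s}).choose k * (#sᶜ - 1) ^ (#{a | f₀ a ∉ s} - k) := by
  set A : Finset α := {a | f₀ a ∉ s}
  have hA : ({a | b ∈ traceFiber s f₀ a} : Finset α) = A := by
    ext a
    rw [mem_filter, traceFiber]
    simp only [A, mem_filter, mem_univ, true_and]
    by_cases h : f₀ a ∈ s
    · simpa [h] using fun h' : b = f₀ a => hb (h' ▸ h)
    · simpa [h] using hb
  have card_erase : ∀ a, #((traceFiber s f₀ a).erase b) = if a ∈ A then #sᶜ - 1 else 1 := by
    intro a
    by_cases h : f₀ a ∈ s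
    · have : b ∉ ({f₀ a} : Finset β) := fun h' => hb (mem_singleton.mp h' ▸ h)
      simp [A, traceFiber, h, erase_eq_of_notMem this]
    · simp [A, traceFiber, h, card_erase_of_mem (mem_compl.mpr hb)]
  rw [hA, ← card_powersetCard k A, card_eq_sum_ones, sum_mul, one_mul]
  refine sum_congr rfl fun K hK => ?_
  obtain ⟨hKA, rfl⟩ := mem_powersetCard.mp hK
  simp_rw [card_erase, prod_ite_mem, prod_const]
  rw [inter_comm, ← sdiff_eq_inter_compl, card_sdiff_of_subset hKA]

end Placements

lemma mul_card_le_card_filter_of_forall_fiber {ι κ : Type*} [DecidableEq κ] {φ : ι → κ}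
    {S : Finset ι} {P : ι → Prop} [DecidablePred P] {p : ℝ}
    (h : ∀ x ∈ S, p * #{y ∈ S | φ y = φ x} ≤ #{y ∈ S | φ y = φ x ∧ P y}) :
    p * #S ≤ #{y ∈ S | P y} := by
  rw [card_eq_sum_card_image φ S, card_eq_sum_card_fiberwise fun y hy =>
    mem_image_of_mem φ (mem_filter.mp hy).1, Nat.cast_sum, Nat.cast_sum, mul_sum]
  refine sum_le_sum fun z hz => ?_
  obtain ⟨x, hx, rfl⟩ := mem_image.mp hz
  simpa only [filter_filter, and_comm] using h x hx

noncomputable def overflowProb (k : ℕ) : ℝ := (Real.exp 4 * (2 * k) ^ k)⁻¹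

lemma one_le_exp_four_mul_pow (k : ℕ) : 1 ≤ Real.exp 4 * (2 * k : ℝ) ^ k := by
  refine one_le_mul_of_one_le_of_one_le (Real.one_le_exp (by norm_num)) ?_
  rcases k.eq_zero_or_pos with rfl | hk
  · simp
  · exact one_le_pow₀ (by norm_cast; omega)

lemma overflowProb_nonneg (k : ℕ) : 0 ≤ overflowProb k :=
  inv_nonneg.mpr (zero_le_one.trans (one_le_exp_four_mul_pow k))

lemma overflowProb_le_one (k : ℕ) : overflowProb k ≤ 1 :=
  inv_le_one_of_one_le₀ (one_le_exp_four_mul_pow k)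

lemma pow_le_exp_four_mul_pred_pow {c m : ℕ} (hc : 2 ≤ c) (hm : m ≤ 2 * c) :
    (c : ℝ) ^ m ≤ Real.exp 4 * ((c - 1 : ℕ) : ℝ) ^ m := by
  have hc' : (1 : ℝ) ≤ ((c - 1 : ℕ) : ℝ) := by exact_mod_cast (by omega : 1 ≤ c - 1)
  set d : ℝ := ((c - 1 : ℕ) : ℝ)
  have hcd : (c : ℝ) = d * (1 / d + 1) := by
    rw [mul_add, mul_one_div_cancel (by positivity), mul_one]
    simp only [d]
    push_cast [show 1 ≤ c by omega]
    ring
  calc (c : ℝ) ^ m = d ^ m * (1 / d + 1) ^ m := by rw [hcd, mul_pow]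
    _ ≤ d ^ m * Real.exp (1 / d) ^ m := by gcongr; exact Real.add_one_le_exp _
    _ = Real.exp (m / d) * d ^ m := by rw [← Real.exp_nat_mul]; ring_nf
    _ ≤ Real.exp 4 * d ^ m := by
        gcongr
        rw [div_le_iff₀ (by positivity)]
        have : (m : ℝ) ≤ 2 * c := by exact_mod_cast hm
        simp only [d]
        push_cast [show 1 ≤ c by omega]
        linarith [show (2 : ℝ) ≤ c by exact_mod_cast hc]

lemma pow_le_two_mul_pow_mul_choose {c r k : ℕ} (h : c ≤ 2 * (r + 1 - k)) :
    (c : ℝ) ^ k ≤ (2 * k) ^ k * r.choose k := by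
  suffices c ^ k ≤ (2 * k) ^ k * r.choose k by exact_mod_cast this
  calc c ^ k ≤ (2 * (r + 1 - k)) ^ k := Nat.pow_le_pow_left h k
    _ = 2 ^ k * (r + 1 - k) ^ k := mul_pow ..
    _ ≤ 2 ^ k * (k.factorial * r.choose k) := by
        rw [← Nat.descFactorial_eq_factorial_mul_choose]
        gcongr
        exact Nat.pow_sub_le_descFactorial r k
    _ ≤ 2 ^ k * (k ^ k * r.choose k) := by gcongr; exact Nat.factorial_le_pow k
    _ = (2 * k) ^ k * r.choose k := by ring

lemma overflowProb_mul_pow_le {c r k : ℕ} (hc : 2 ≤ c) (hcr : c ≤ 2 * (r + 1 - k))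
    (hrc : r ≤ 2 * c) :
    overflowProb k * (c : ℝ) ^ r ≤ r.choose k * ((c - 1 : ℕ) : ℝ) ^ (r - k) := by
  rw [overflowProb, ← pow_sub_mul_pow (c : ℝ) (by omega : k ≤ r),
    inv_mul_le_iff₀ (by linarith [one_le_exp_four_mul_pow k])]
  calc (c : ℝ) ^ (r - k) * c ^ k
      ≤ Real.exp 4 * ((c - 1 : ℕ) : ℝ) ^ (r - k) * ((2 * k) ^ k * r.choose k) :=
        mul_le_mul (pow_le_exp_four_mul_pred_pow hc (by omega)) (pow_le_two_mul_pow_mul_choose hcr)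
          (by positivity) (by positivity)
    _ = _ := by ring

section Bins

variable {n k : ℕ}

def loadBelow (n k : ℕ) (s : Finset (Fin n)) : Finset (Fin n → Fin n) :=
  {f | ∀ b ∈ s, load n f b < k}

lemma overflowProb_mul_card_fiber_le {s : Finset (Fin n)} {b : Fin n} (hk : 1 ≤ k) (hb : b ∉ s)
    (hs : 2 * ((#s + 1) * k) ≤ n) {f₀ : Fin n → Fin n} (hf₀ : f₀ ∈ loadBelow n k s) :
    overflowProb k * #{f ∈ loadBelow n k s | traceOn s f = traceOn s f₀} ≤
      #{f ∈ loadBelow n k s | traceOn s f = traceOn s f₀ ∧ k ≤ load n f b} := by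
  have fiber_eq : {f ∈ loadBelow n k s | traceOn s f = traceOn s f₀}
      = Fintype.piFinset (traceFiber s f₀) := by
    ext f
    rw [mem_filter, ← traceOn_eq_iff_mem_piFinset, and_iff_right_iff_imp]
    intro h
    refine mem_filter.mpr ⟨mem_univ f, fun b' hb' => ?_⟩
    rw [load, card_filter_eq_of_traceOn_eq h hb']
    exact (mem_filter.mp hf₀).2 b' hb'
  have overflow_eq : {f ∈ loadBelow n k s | traceOn s f = traceOn s f₀ ∧ k ≤ load n f b}
      = {f ∈ Fintype.piFinset (traceFiber s f₀) | k ≤ #{a | f a = b}} := by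
    rw [← fiber_eq, filter_filter]
    rfl
  set r := #{a | f₀ a ∉ s}
  have hr : n ≤ r + k * #s := by
    have hsplit := card_filter_add_card_filter_not (s := univ) (p := fun a => f₀ a ∉ s)
    have hin : #{a | f₀ a ∈ s} ≤ k * #s :=
      card_filter_mem_le_mul_card fun b' hb' => (mem_filter.mp hf₀).2 b' hb'
    simp only [not_not, card_univ, Fintype.card_fin] at hsplit
    omega
  have hrn : r ≤ n := (card_le_univ _).trans (Fintype.card_fin n).le
  have hc : #sᶜ = n - #s := by rw [card_compl, Fintype.card_fin]
  have hsk : (#s + 1) * k = k * #s + k := by ring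
  have hs1 : #s + 1 ≤ (#s + 1) * k := Nat.le_mul_of_pos_right _ hk
  rw [fiber_eq, overflow_eq, card_piFinset_traceFiber]
  calc overflowProb k * ((#sᶜ ^ r : ℕ) : ℝ) = overflowProb k * (#sᶜ : ℝ) ^ r := by push_cast; rfl
    _ ≤ r.choose k * ((#sᶜ - 1 : ℕ) : ℝ) ^ (r - k) :=
        overflowProb_mul_pow_le (by omega) (by omega) (by omega)
    _ = ((∑ K ∈ powersetCard k {a | b ∈ traceFiber s f₀ a},
          ∏ a ∈ Kᶜ, #((traceFiber s f₀ a).erase b) : ℕ) : ℝ) := by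
        rw [sum_prod_card_erase_traceFiber hb]
        push_cast
        rfl
    _ ≤ _ := by exact_mod_cast sum_prod_card_erase_le_card_piFinset_filter _ b k

lemma card_loadBelow_insert_le {s : Finset (Fin n)} {b : Fin n} (hk : 1 ≤ k) (hb : b ∉ s)
    (hs : 2 * ((#s + 1) * k) ≤ n) :
    (#(loadBelow n k (insert b s)) : ℝ) ≤ (1 - overflowProb k) * #(loadBelow n k s) := by
  have insert_eq : loadBelow n k (insert b s) = {f ∈ loadBelow n k s | ¬ k ≤ load n f b} := by
    ext f
    simp [loadBelow, and_comm]
  have hsplit : (#(loadBelow n k s) : ℝ) = #{f ∈ loadBelow n k s | k ≤ load n f b} +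
      #{f ∈ loadBelow n k s | ¬ k ≤ load n f b} := by
    exact_mod_cast (card_filter_add_card_filter_not _).symm
  have hoverflow := mul_card_le_card_filter_of_forall_fiber (φ := traceOn s)
    fun f₀ hf₀ => overflowProb_mul_card_fiber_le hk hb hs hf₀
  rw [insert_eq]
  linarith

lemma card_loadBelow_le (hk : 1 ≤ k) (s : Finset (Fin n)) (hs : 2 * (#s * k) ≤ n) :
    (#(loadBelow n k s) : ℝ) ≤ (1 - overflowProb k) ^ #s * n ^ n := by
  induction s using Finset.induction_on with
  | empty => simp [loadBelow]
  | insert b s hb ih =>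
    rw [card_insert_of_notMem hb] at hs ⊢
    calc _ ≤ (1 - overflowProb k) * #(loadBelow n k s) := card_loadBelow_insert_le hk hb hs
      _ ≤ (1 - overflowProb k) * ((1 - overflowProb k) ^ #s * n ^ n) := by
          gcongr
          · linarith [overflowProb_le_one k]
          · exact ih (le_trans (by gcongr; omega) hs)
      _ = _ := by ring

lemma card_maxLoad_lt_le_card_loadBelow {x : ℝ} (hx : x ≤ k) (s : Finset (Fin n)) :
    Nat.card {f : Fin n → Fin n // (maxLoad n f : ℝ) < x} ≤ #(loadBelow n k s) := by
  rw [Nat.card_eq_fintype_card, Fintype.card_subtype]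
  refine card_le_card fun f hf => mem_filter.mpr ⟨mem_univ f, fun b _ => ?_⟩
  have hmax : (maxLoad n f : ℝ) < x := (mem_filter.mp hf).2
  have hb : (load n f b : ℝ) ≤ maxLoad n f := by exact_mod_cast le_sup (mem_univ b)
  exact_mod_cast (show (load n f b : ℝ) < k by linarith)

end Bins

lemma one_sub_pow_le_inv_of_log_le {p : ℝ} {t n : ℕ} (hp : p ≤ 1) (hn : 0 < n)
    (h : Real.log n ≤ p * t) : (1 - p) ^ t ≤ 1 / n := by
  calc (1 - p) ^ t ≤ Real.exp (-p) ^ t :=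
        pow_le_pow_left₀ (by linarith) (Real.one_sub_le_exp_neg p) t
    _ = Real.exp (-(p * t)) := by rw [← Real.exp_nat_mul]; ring_nf
    _ ≤ Real.exp (-Real.log n) := Real.exp_le_exp.mpr (by linarith)
    _ = 1 / n := by rw [Real.exp_neg, Real.exp_log (by positivity), one_div]

lemma log_le_overflowProb_mul_div {n k : ℕ} (hk : 1 ≤ k) (hl : 1 ≤ Real.log n)
    (h : 4 * k * (Real.log n * (Real.exp 4 * (2 * k) ^ k)) ≤ n) :
    Real.log n ≤ overflowProb k * (n / (2 * k) : ℕ) := by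
  set M := Real.log n * (Real.exp 4 * (2 * k) ^ k)
  have hM : 1 ≤ M := one_le_mul_of_one_le_of_one_le hl (one_le_exp_four_mul_pow k)
  have hk' : (1 : ℝ) ≤ k := by exact_mod_cast hk
  have hdiv : (n : ℝ) < ((n / (2 * k) : ℕ) + 1) * (2 * k) := by
    exact_mod_cast (Nat.lt_div_mul_add (by omega : 0 < 2 * k)).trans_eq (by ring)
  calc Real.log n = overflowProb k * M := by
        rw [overflowProb, inv_mul_eq_div, eq_div_iff (by linarith [one_le_exp_four_mul_pow k])]
    _ ≤ _ := by
        gcongr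
        · exact overflowProb_nonneg k
        · nlinarith

-- With `L = l / log l ≤ k < L + 1` this is the logarithm of `4 k l e⁴ (2k)ᵏ ≤ eˡ`, with room
-- to spare.
lemma eventually_log_div_log_estimate : ∀ᶠ l : ℝ in atTop, 1 ≤ l / Real.log l ∧
    (l / Real.log l + 2) * Real.log (4 * (l / Real.log l)) + Real.log l + 5 ≤ l := by
  filter_upwards [(Real.isLittleO_pow_log_id_atTop (n := 2)).bound (by norm_num : (0 : ℝ) < 1 / 14),
    Real.tendsto_log_atTop.eventually_ge_atTop 1,
    (Real.tendsto_log_atTop.comp Real.tendsto_log_atTop).eventually_ge_atTop 4,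
    eventually_gt_atTop 0] with l hsq hm hμ hl
  simp only [Function.comp_apply, id, norm_pow, Real.norm_eq_abs, sq_abs, abs_of_pos hl] at hsq hμ
  set m := Real.log l
  have hm0 : 0 < m := by linarith
  have hL : 3 * m + 11 ≤ l / m := by rw [le_div_iff₀ hm0]; nlinarith
  have hlog4 : Real.log 4 ≤ 3 := by
    linarith [Real.log_le_sub_one_of_pos (by norm_num : (0 : ℝ) < 4)]
  have hlog4L : Real.log (4 * (l / m)) = Real.log 4 + m - Real.log m := by
    rw [Real.log_mul (by norm_num) (by positivity), Real.log_div hl.ne' hm0.ne']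
    ring
  have hLm : l / m * m = l := div_mul_cancel₀ l hm0.ne'
  refine ⟨by linarith, ?_⟩
  rw [hlog4L]
  nlinarith

lemma four_mul_mul_exp_four_mul_pow_le_exp {l L : ℝ} {k : ℕ} (hl : 0 < l) (hL : 1 ≤ L)
    (hLk : L ≤ k) (hkL : k < L + 1) (h : (L + 2) * Real.log (4 * L) + Real.log l + 5 ≤ l) :
    4 * k * (l * (Real.exp 4 * (2 * k) ^ k)) ≤ Real.exp l := by
  have hk : (1 : ℝ) ≤ k := hL.trans hLk
  have hexp : 4 * k * (l * (Real.exp 4 * (2 * k) ^ k))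
      = Real.exp (Real.log 2 + ((k + 1 : ℕ) : ℝ) * Real.log (2 * k) + Real.log l + 4) := by
    rw [Real.exp_add, Real.exp_add, Real.exp_add, Real.exp_nat_mul, Real.exp_log two_pos,
      Real.exp_log (by positivity), Real.exp_log hl]
    ring
  have hpow : ((k + 1 : ℕ) : ℝ) * Real.log (2 * k) ≤ (L + 2) * Real.log (4 * L) := by
    push_cast
    exact mul_le_mul (by linarith) (Real.log_le_log (by positivity) (by linarith))
      (Real.log_nonneg (by linarith)) (by linarith)
  rw [hexp, Real.exp_le_exp]
  linarith [Real.log_le_sub_one_of_pos two_pos]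

noncomputable def loadThreshold (n : ℕ) : ℕ := ⌈Real.log n / Real.log (Real.log n)⌉₊

lemma eventually_log_le_overflowProb_mul : ∀ᶠ n : ℕ in atTop, 1 ≤ loadThreshold n ∧
    Real.log n ≤ overflowProb (loadThreshold n) * (n / (2 * loadThreshold n) : ℕ) := by
  filter_upwards [(Real.tendsto_log_atTop.comp tendsto_natCast_atTop_atTop).eventually
    eventually_log_div_log_estimate, eventually_gt_atTop 0] with n ⟨hL, hestimate⟩ hn
  simp only [Function.comp_apply] at hL hestimate
  set l := Real.log n
  set L := l / Real.log l
  have hLk : L ≤ loadThreshold n := Nat.le_ceil L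
  have hk : 1 ≤ loadThreshold n := by exact_mod_cast hL.trans hLk
  have hl : 1 ≤ l := by
    by_contra! h
    have hl0 := Real.log_natCast_nonneg n
    linarith [div_nonpos_of_nonneg_of_nonpos hl0 (Real.log_nonpos hl0 h.le)]
  refine ⟨hk, log_le_overflowProb_mul_div hk hl ?_⟩
  exact (four_mul_mul_exp_four_mul_pow_le_exp (by linarith) hL hLk
    (Nat.ceil_lt_add_one (by linarith)) hestimate).trans_eq (Real.exp_log (Nat.cast_pos.mpr hn))

/-- Throwing `n` balls independently and uniformly at random into `n` bins,
for sufficiently large `n` the probability that the maximum load is less than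
`log n / log log n` is at most `1/n`. -/
theorem stmt1 :
    ∃ N : ℕ, ∀ n : ℕ, N ≤ n →
      (Nat.card {f : Fin n → Fin n //
          (maxLoad n f : ℝ) < Real.log n / Real.log (Real.log n)} : ℝ) /
        (n : ℝ) ^ n ≤ 1 / n := by
  obtain ⟨N, hN⟩ := eventually_atTop.mp
    (eventually_log_le_overflowProb_mul.and (eventually_gt_atTop 0))
  refine ⟨N, fun n hn => ?_⟩
  obtain ⟨⟨hk, hlog⟩, hn⟩ := hN n hn
  set k := loadThreshold n
  obtain ⟨T, -, hT⟩ := exists_subset_card_eq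
    (show n / (2 * k) ≤ #(univ : Finset (Fin n)) by simpa using Nat.div_le_self n _)
  have hTk : 2 * (#T * k) ≤ n := by
    rw [hT, ← mul_assoc, mul_comm 2, mul_assoc]
    exact Nat.div_mul_le_self n (2 * k)
  rw [div_le_iff₀ (by positivity)]
  calc (Nat.card {f : Fin n → Fin n //
          (maxLoad n f : ℝ) < Real.log n / Real.log (Real.log n)} : ℝ)
      ≤ #(loadBelow n k T) := by
        exact_mod_cast card_maxLoad_lt_le_card_loadBelow (Nat.le_ceil _) T
    _ ≤ (1 - overflowProb k) ^ (n / (2 * k)) * n ^ n := hT ▸ card_loadBelow_le hk T hTk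
    _ ≤ 1 / n * n ^ n := by
        gcongr
        exact one_sub_pow_le_inv_of_log_le (overflowProb_le_one k) hn hlog
end

section
/- If the maximum load of the repeated balls-into-bins process after t rounds is at most C·√t with probability at least 1 - 1/n^2 for each t, and the cover time of the delayed random walk of a ball is bounded by the number of rounds needed to accumulate c·n·log n progress steps, where progress over t rounds under FIFO is at least t/(C·√t) = √t/C, then the parallel cover time (time for all n balls to visit all nodes) is O(n^2 log^2 n) with high probability. -/
open MeasureTheory
open scoped ENNReal

/-!
With `K = (C c)²` and `t = ⌈K n² log² n⌉`, we get `√t / C ≥ c n log n`. So on the event of probability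
at least `1 - 1/n²` on which every ball has progress at least `√t / C` after `t` rounds, every ball
has accumulated the `c n log n` progress steps that force it to cover all nodes.
-/

lemma le_sqrt_div_of_sq_mul_le {a C t : ℝ} (hC : 0 < C) (h : (C * a) ^ 2 ≤ t) : a ≤ √t / C := by
  rw [le_div_iff₀ hC, mul_comm]
  exact Real.le_sqrt_of_sq_le h

lemma mul_log_le_sqrt_ceil_div (n C c : ℝ) (hC : 0 < C) :
    c * n * Real.log n ≤ √(⌈(C * c) ^ 2 * n ^ 2 * Real.log n ^ 2⌉₊ : ℝ) / C :=
  le_sqrt_div_of_sq_mul_le hC <| calc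
    (C * (c * n * Real.log n)) ^ 2 = (C * c) ^ 2 * n ^ 2 * Real.log n ^ 2 := by ring
    _ ≤ _ := Nat.le_ceil _

theorem stmt6_general (n : ℕ) (C c : ℝ) (hC : 0 < C) (hc : 0 < c)
    {Ω : Type*} [MeasurableSpace Ω] (μ : Measure Ω) [IsProbabilityMeasure μ]
    (prog : Fin n → ℕ → Ω → ℕ)
    (cov : Fin n → ℕ → Set Ω)
    (hprog : ∀ t : ℕ,
      μ {ω | ∀ i : Fin n, Real.sqrt t / C ≤ (prog i t ω : ℝ)} ≥
        1 - (1 : ℝ≥0∞) / (n : ℝ≥0∞) ^ 2)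
    (hcover : ∀ (i : Fin n) (t : ℕ),
      {ω | c * n * Real.log n ≤ (prog i t ω : ℝ)} ⊆ cov i t) :
    ∃ K : ℝ, 0 < K ∧
      μ (⋂ i : Fin n, cov i ⌈K * n ^ 2 * (Real.log n) ^ 2⌉₊) ≥
        1 - (1 : ℝ≥0∞) / (n : ℝ≥0∞) ^ 2 := by
  refine ⟨(C * c) ^ 2, by positivity, ?_⟩
  refine (hprog ⌈(C * c) ^ 2 * n ^ 2 * Real.log n ^ 2⌉₊).trans (measure_mono ?_)
  intro ω hω
  rw [Set.mem_iInter]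
  exact fun i ↦ hcover i _ ((mul_log_le_sqrt_ceil_div n C c hC).trans (hω i))

/-- Repeated balls-into-bins on `K_n`. `prog i t ω` is the progress (number of
forwardings) of ball `i` during the first `t` rounds and `cov i t` is the event
that ball `i` has visited all nodes by round `t`.  If, with probability
`≥ 1 - 1/n²`, every ball's progress over `t` rounds is at least `√t / C`
(as follows from the `O(√t)` maximum-load bound under FIFO), and a ball covers
all nodes once it has accumulated `c·n·log n` progress steps, then the parallel
cover time is `O(n² log² n)` with probability `≥ 1 - 1/n²`. -/
theorem stmt6 (n : ℕ) (hn : 2 ≤ n) (C c : ℝ) (hC : 0 < C) (hc : 0 < c)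
    {Ω : Type*} [MeasurableSpace Ω] (μ : Measure Ω) [IsProbabilityMeasure μ]
    (prog : Fin n → ℕ → Ω → ℕ)
    (cov : Fin n → ℕ → Set Ω)
    (hprog : ∀ t : ℕ,
      μ {ω | ∀ i : Fin n, Real.sqrt t / C ≤ (prog i t ω : ℝ)} ≥
        1 - (1 : ℝ≥0∞) / (n : ℝ≥0∞) ^ 2)
    (hcover : ∀ (i : Fin n) (t : ℕ),
      {ω | c * n * Real.log n ≤ (prog i t ω : ℝ)} ⊆ cov i t) :
    ∃ K : ℝ, 0 < K ∧
      μ (⋂ i : Fin n, cov i ⌈K * n ^ 2 * (Real.log n) ^ 2⌉₊) ≥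
        1 - (1 : ℝ≥0∞) / (n : ℝ≥0∞) ^ 2 :=
  stmt6_general n C c hC hc μ prog cov hprog hcover
end
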